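/- Hall's two-generator trapping lemma: let D be a countably infinite group with bijective enumeration d : ℕ → D, and in the unrestricted wreath product D Wr ℤ define ω ∈ D^ℤ by ω(2^k) = d(k) for k = 0,1,2,... and ω(i) = 1 for all other i ∈ ℤ. Let H = ⟨ω, z⟩ where z is the shift generator. Then for every l ∈ D and every n₀ ∈ ℕ there exists ρ ∈ H lying in the base group D^ℤ with ρ(0) = l and ρ(j) = 1 for all j with 0 < |j| ≤ n₀. -/

import Mathlib

/-- The action of `H` on the full direct product `H → G` by permuting coordinates. -/
def permAction (G H : Type*) [Group G] [Group H] : H →* MulAut (H → G) where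
  toFun h :=
    { toFun := fun f x => f (h⁻¹ * x)
      invFun := fun f x => f (h * x)
      left_inv := fun f => funext fun x => by simp
      right_inv := fun f => funext fun x => by simp
      map_mul' := fun f g => rfl }
  map_one' := by
    apply MulEquiv.ext
    intro f; funext x; simp
  map_mul' := fun h₁ h₂ => by
    apply MulEquiv.ext
    intro f; funext x
    simp [mul_assoc]

/-- The unrestricted wreath product `D Wr ℤ` (with `ℤ` written multiplicatively). -/
abbrev WreathZ (D : Type*) [Group D] :=
  (Multiplicative ℤ → D) ⋊[permAction D (Multiplicative ℤ)] Multiplicative ℤ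

/-!
Conjugating `ω` by `z^{-t}` translates it so that the coordinate `2^t` lands at `0`. Given `l`,
the enumeration being a bijection yields arbitrarily large `i, j` with `d i * d j = l`, and then
`ρ = ω^{z^{-2^i}} ω^{z^{-2^j}}` has `ρ(0) = l`. For `0 < |m| ≤ n₀` neither `2^i + m` nor
`2^j + m` is a power of `2`, since every power of `2` other than `2^i` differs from `2^i` by at
least `2^(i-1) > n₀`; so `ρ(m) = 1`.
-/

open SemidirectProduct Multiplicative

theorem Function.Bijective.exists_mul_eq {D : Type*} [Group D] {d : ℕ → D}
    (hd : Function.Bijective d) (l : D) (N : ℕ) :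
    ∃ i j, N ≤ i ∧ N ≤ j ∧ d i * d j = l := by
  -- `f i` indexes the partner `(d i)⁻¹ * l` of `d i`; being injective, `f` tends to `∞`.
  set f : ℕ → ℕ := Function.surjInv hd.surjective ∘ (fun x => x⁻¹ * l) ∘ d
  have hf : Function.Injective f :=
    (Function.injective_surjInv _).comp
      (((mul_left_injective l).comp inv_injective).comp hd.injective)
  have hf_tendsto : Filter.Tendsto f Filter.atTop Filter.atTop := by
    simpa only [Nat.cofinite_eq_atTop] using hf.tendsto_cofinite
  obtain ⟨i, hi, hfi⟩ :=
    ((Filter.eventually_ge_atTop N).and (hf_tendsto.eventually_ge_atTop N)).exists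
  refine ⟨i, f i, hi, hfi, ?_⟩
  simp only [f, Function.comp_apply, Function.surjInv_eq, mul_inv_cancel_left]

theorem two_pow_add_ne_two_pow {i k : ℕ} {m : ℤ} (hm : m ≠ 0) (hmi : 2 * |m| < 2 ^ i) :
    (2 : ℤ) ^ i + m ≠ 2 ^ k := by
  intro h
  rcases lt_trichotomy k i with hki | rfl | hik
  · have : (2 : ℤ) ^ k * 2 ≤ 2 ^ i := by
      rw [← pow_succ]; exact pow_le_pow_right₀ (by norm_num) hki
    linarith [neg_le_abs m]
  · exact hm (by linarith)
  · have : (2 : ℤ) ^ i * 2 ≤ 2 ^ k := by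
      rw [← pow_succ]; exact pow_le_pow_right₀ (by norm_num) hik
    linarith [le_abs_self m, pow_pos (two_pos : (0 : ℤ) < 2) i]

section Wreath

variable {D : Type*} [Group D]

theorem permAction_ofAdd_neg_apply (f : Multiplicative ℤ → D) (t x : ℤ) :
    permAction D (Multiplicative ℤ) (ofAdd (-t)) f (ofAdd x) = f (ofAdd (t + x)) := by
  change f ((ofAdd (-t))⁻¹ * ofAdd x) = _
  rw [ofAdd_neg, inv_inv, ← ofAdd_add]

theorem inl_permAction_mem_closure (f : Multiplicative ℤ → D) (c : Multiplicative ℤ) :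
    (inl (permAction D (Multiplicative ℤ) c f) : WreathZ D) ∈
      Subgroup.closure {(inl f : WreathZ D), inr (ofAdd (1 : ℤ))} := by
  set K := Subgroup.closure {(inl f : WreathZ D), inr (ofAdd (1 : ℤ))}
  have hf : (inl f : WreathZ D) ∈ K := Subgroup.subset_closure (by simp)
  have hz : (inr (ofAdd (1 : ℤ)) : WreathZ D) ∈ K := Subgroup.subset_closure (by simp)
  have hc : ∀ c : Multiplicative ℤ, (inr c : WreathZ D) ∈ K := by
    intro c
    have : (inr c : WreathZ D) = inr (ofAdd (1 : ℤ)) ^ c.toAdd := by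
      rw [← map_zpow, ← ofAdd_zsmul, smul_eq_mul, mul_one, ofAdd_toAdd]
    exact this ▸ Subgroup.zpow_mem _ hz _
  rw [inl_aut]
  exact mul_mem (mul_mem (hc c) hf) (hc c⁻¹)

end Wreath

/-- Hall's two-generator trapping lemma: with `D` countably infinite, enumerated by
the bijection `d : ℕ → D`, and `ω` the element of the base group of `D Wr ℤ` with
`ω(2^k) = d k` and `ω(i) = 1` at all other coordinates, the two-generator subgroup
`H = ⟨ω, z⟩` (where `z` is the shift) contains, for every `l ∈ D` and `n₀ ∈ ℕ`, an
element `ρ` of the base group with `ρ(0) = l` and `ρ(j) = 1` for `0 < |j| ≤ n₀`. -/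
theorem hall_trapping_lemma (D : Type*) [Group D] (d : ℕ → D)
    (hd : Function.Bijective d) (ω : Multiplicative ℤ → D)
    (hω1 : ∀ k : ℕ, ω (Multiplicative.ofAdd ((2 : ℤ) ^ k)) = d k)
    (hω2 : ∀ i : ℤ, (∀ k : ℕ, i ≠ 2 ^ k) → ω (Multiplicative.ofAdd i) = 1) :
    ∀ (l : D) (n₀ : ℕ), ∃ ρ : Multiplicative ℤ → D,
      (SemidirectProduct.inl ρ : WreathZ D) ∈
        Subgroup.closure {(SemidirectProduct.inl ω : WreathZ D),
          SemidirectProduct.inr (Multiplicative.ofAdd (1 : ℤ))} ∧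
      ρ (Multiplicative.ofAdd (0 : ℤ)) = l ∧
      ∀ j : ℤ, 0 < |j| → |j| ≤ (n₀ : ℤ) → ρ (Multiplicative.ofAdd j) = 1 := by
  intro l n₀
  obtain ⟨i, j, hi, hj, hij⟩ := hd.exists_mul_eq l (n₀ + 1)
  let translate (t : ℕ) := permAction D (Multiplicative ℤ) (ofAdd (-(2 : ℤ) ^ t)) ω
  refine ⟨translate i * translate j, ?_, ?_, ?_⟩
  · rw [map_mul]
    exact mul_mem (inl_permAction_mem_closure ω _) (inl_permAction_mem_closure ω _)
  · simp only [translate, Pi.mul_apply, permAction_ofAdd_neg_apply, add_zero, hω1, hij]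
  · intro m hm0 hm
    have small : ∀ t, n₀ + 1 ≤ t → 2 * |m| < 2 ^ t := fun t ht =>
      calc 2 * |m| ≤ 2 * n₀ := by linarith
        _ < 2 ^ (n₀ + 1) := by
          have : n₀ < 2 ^ n₀ := Nat.lt_two_pow_self
          rw [pow_succ']; exact_mod_cast (by omega : 2 * n₀ < 2 * 2 ^ n₀)
        _ ≤ 2 ^ t := pow_le_pow_right₀ (by norm_num) ht
    have hm0' : m ≠ 0 := abs_pos.mp hm0
    simp only [translate, Pi.mul_apply, permAction_ofAdd_neg_apply,
      hω2 _ fun k => two_pow_add_ne_two_pow hm0' (small i hi),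
      hω2 _ fun k => two_pow_add_ne_two_pow hm0' (small j hj), mul_one]
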